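/- Let N ≥ 1 and k ≥ 0 be integers, ℓ a prime dividing N exactly once, and a, b integers with ℓb − a(N/ℓ) = 1; set γ_ℓ = [[ℓ, a],[N, ℓb]]. For every f ∈ M_k(Γ₀(N)), the form U_ℓ(f) + ℓ^{k/2−1}·w_ℓ(f) has level N/ℓ: there exists g ∈ M_k(Γ₀(N/ℓ)) such that g(z) = (1/ℓ)·∑_{j=0}^{ℓ−1} f((z+j)/ℓ) + ℓ^{k−1}·(Nz+ℓb)^{−k}·f(γ_ℓ·z) for all z ∈ ℍ. -/

import Mathlib

/-!
Put `M = N / ℓ`, `W = [[ℓ, a], [N, ℓb]]` and `R_j = [[1, j], [0, ℓ]]` for `0 ≤ j < ℓ`. Every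
integer matrix of determinant `ℓ` with lower row `(c, d)`, `N ∣ c`, `ℓ ∣ d` (in particular every
`Wγ` with `γ ∈ Γ₀(M)`) lies in exactly one of the cosets `Γ₀(N) W`, `Γ₀(N) R_j`. As moreover
`W = R_j γ_j` with `γ_j ∈ Γ₀(M)`, the elements `1` and `γ_j` represent the cosets of
`W⁻¹ Γ₀(N) W ∩ Γ₀(M)` in `Γ₀(M)`, so `f ∣ W + ∑_j f ∣ R_j` is the trace of `f ∣ W` down to
level `M`, a modular form of level `M`. With the normalisation
`(f ∣[k] g) z = det(g)^(k-1) (cz + d)^(-k) f(gz)` these slashes are `ℓ⁻¹ f((z + j) / ℓ)` and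
`ℓ^(k-1) (Nz + ℓb)^(-k) f(Wz)`.
-/

open UpperHalfPlane Complex CongruenceSubgroup MatrixGroups

noncomputable def UpperHalfPlane.shiftDiv (p : ℕ) (hp : 0 < p) (j : ℕ) (z : ℍ) : ℍ :=
  ⟨((z : ℂ) + (j : ℂ)) / (p : ℂ), by
    have h : (((z : ℂ) + (j : ℂ)) / ((p : ℝ) : ℂ)).im = ((z : ℂ) + (j : ℂ)).im / (p : ℝ) :=
      Complex.div_ofReal_im _ _
    rw [show ((p : ℕ) : ℂ) = ((p : ℝ) : ℂ) by push_cast; ring, h]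
    have him : ((z : ℂ) + (j : ℂ)).im = (z : ℂ).im := by simp
    rw [him]
    exact div_pos z.im_pos (by exact_mod_cast hp)⟩

open ConjAct
open scoped ModularForm Pointwise
open Matrix.SpecialLinearGroup (mapGL)

lemma Subgroup.mem_conjAct_inv_smul_iff {G : Type*} [Group G] (Γ : Subgroup G) (W x : G) :
    x ∈ toConjAct W⁻¹ • Γ ↔ W * x * W⁻¹ ∈ Γ := by
  rw [map_inv, Γ.mem_inv_pointwise_smul_iff, toConjAct_smul]

section Cosets

variable {G ι : Type*} [Group G] {Γ ℋ : Subgroup G} {W : G} {R : ι → G} {h : ι → ℋ}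

theorem QuotientGroup.bijective_mk_of_cosetReps (hWR : ∀ i, W = R i * h i)
    (hcover : ∀ x ∈ ℋ, ∃ i, W * x * (R i)⁻¹ ∈ Γ)
    (hdisj : ∀ i j, R i * (R j)⁻¹ ∈ Γ → i = j) :
    Function.Bijective fun i ↦ (h i : ℋ ⧸ (toConjAct W⁻¹ • Γ).subgroupOf ℋ) := by
  constructor
  · intro i j hij
    rw [QuotientGroup.eq, Subgroup.mem_subgroupOf, Subgroup.mem_conjAct_inv_smul_iff] at hij
    apply hdisj
    have hconj : W * ((h i : G)⁻¹ * h j) * W⁻¹ = R i * (R j)⁻¹ := by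
      nth_rw 1 [hWR i]; rw [hWR j]; group
    simpa [hconj] using hij
  · intro q
    induction q using QuotientGroup.induction_on with | H x => ?_
    obtain ⟨i, hi⟩ := hcover _ (inv_mem x.2)
    refine ⟨i, (QuotientGroup.eq.mpr ?_).symm⟩
    rw [Subgroup.mem_subgroupOf, Subgroup.mem_conjAct_inv_smul_iff]
    have hconj : W * ((x : G)⁻¹ * h i) * W⁻¹ = W * (x : G)⁻¹ * (R i)⁻¹ := by
      nth_rw 2 [hWR i]; group
    simpa [hconj] using hi

end Cosets

section Trace

variable {Γ ℋ : Subgroup (GL (Fin 2) ℝ)} {k : ℤ} {ι : Type*} [Fintype ι] {W : GL (Fin 2) ℝ}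
  {R : ι → GL (Fin 2) ℝ} {h : ι → ℋ}

theorem ModularForm.exists_eq_sum_slash (f : ModularForm Γ k) (hWR : ∀ i, W = R i * h i)
    (hcover : ∀ x ∈ ℋ, ∃ i, W * x * (R i)⁻¹ ∈ Γ)
    (hdisj : ∀ i j, R i * (R j)⁻¹ ∈ Γ → i = j) :
    ∃ g : ModularForm ℋ k, ⇑g = ∑ i, ⇑f ∣[k] R i := by
  have hbij := QuotientGroup.bijective_mk_of_cosetReps hWR hcover hdisj
  have : Finite (ℋ ⧸ (toConjAct W⁻¹ • Γ).subgroupOf ℋ) := Finite.of_surjective _ hbij.2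
  have : (toConjAct W⁻¹ • Γ).IsFiniteRelIndex ℋ := ⟨Subgroup.index_ne_zero_of_finite⟩
  refine ⟨ModularForm.trace ℋ (translate f W), ?_⟩
  rw [ModularForm.coe_trace]
  -- the `Fintype` instance over which `ModularForm.trace` sums
  let := Fintype.ofFinite (ℋ ⧸ (toConjAct W⁻¹ • Γ).subgroupOf ℋ)
  refine (Fintype.sum_bijective _ hbij _ _ fun i ↦ ?_).symm
  rw [SlashInvariantForm.quotientFunc_mk, ModularForm.coe_translate, ← SlashAction.slash_mul,
    hWR i, mul_inv_cancel_right]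

end Trace

lemma Matrix.of_fin_two_eq_iff {α : Type*} {a b c d a' b' c' d' : α} :
    !![a, b; c, d] = !![a', b'; c', d'] ↔ a = a' ∧ b = b' ∧ c = c' ∧ d = d' := by
  simp [Matrix.vecCons_inj, and_assoc]

lemma CongruenceSubgroup.mem_Gamma0_iff_dvd {N : ℕ} {A : SL(2, ℤ)} :
    A ∈ Gamma0 N ↔ (N : ℤ) ∣ A 1 0 := by
  rw [Gamma0_mem, ZMod.intCast_zmod_eq_zero_iff_dvd]

section Matrices

variable (ℓ M : ℕ) (a b : ℤ)

def atkinLehnerMatrix : Matrix (Fin 2) (Fin 2) ℤ := !![(ℓ : ℤ), a; ℓ * M, ℓ * b]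

def shiftMatrix (j : ℕ) : Matrix (Fin 2) (Fin 2) ℤ := !![1, (j : ℤ); 0, ℓ]

def cosetRep : Option (Fin ℓ) → Matrix (Fin 2) (Fin 2) ℤ
  | none => atkinLehnerMatrix ℓ M a b
  | some j => shiftMatrix ℓ j

def atkinLehnerSet : Set (Matrix (Fin 2) (Fin 2) ℤ) :=
  {A | A.det = ℓ ∧ (ℓ * M : ℤ) ∣ A 1 0 ∧ (ℓ : ℤ) ∣ A 1 1}

variable {ℓ M a b}

lemma det_atkinLehnerMatrix (hab : ℓ * b - a * M = 1) : (atkinLehnerMatrix ℓ M a b).det = ℓ := by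
  rw [atkinLehnerMatrix, Matrix.det_fin_two_of]
  linear_combination (ℓ : ℤ) * hab

lemma det_shiftMatrix (j : ℕ) : (shiftMatrix ℓ j).det = ℓ := by
  simp [shiftMatrix, Matrix.det_fin_two_of]

lemma det_atkinLehnerMatrix_pos (hℓ : 0 < ℓ) (hab : ℓ * b - a * M = 1) :
    0 < (atkinLehnerMatrix ℓ M a b).det := by
  rw [det_atkinLehnerMatrix hab]
  exact_mod_cast hℓ

lemma det_shiftMatrix_pos (hℓ : 0 < ℓ) (j : ℕ) : 0 < (shiftMatrix ℓ j).det := by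
  rw [det_shiftMatrix]
  exact_mod_cast hℓ

lemma det_cosetRep_pos (hℓ : 0 < ℓ) (hab : ℓ * b - a * M = 1) :
    ∀ i, 0 < (cosetRep ℓ M a b i).det
  | none => det_atkinLehnerMatrix_pos hℓ hab
  | some j => det_shiftMatrix_pos hℓ j

lemma atkinLehnerMatrix_mul_mem (hab : ℓ * b - a * M = 1) {γ : SL(2, ℤ)} (hγ : γ ∈ Gamma0 M) :
    atkinLehnerMatrix ℓ M a b * γ ∈ atkinLehnerSet ℓ M := by
  obtain ⟨t, ht⟩ := mem_Gamma0_iff_dvd.mp hγ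
  refine ⟨by rw [Matrix.det_mul, γ.det_coe, mul_one, det_atkinLehnerMatrix hab], ?_, ?_⟩ <;>
    simp only [atkinLehnerMatrix, Matrix.mul_apply, Fin.sum_univ_two, Matrix.of_apply,
      Matrix.cons_val, ht]
  · exact ⟨γ 0 0 + b * t, by ring⟩
  · exact ⟨M * γ 0 1 + b * γ 1 1, by ring⟩

lemma exists_mem_Gamma0_cosetRep_mul (hab : ℓ * b - a * M = 1) (i : Option (Fin ℓ)) :
    ∃ γ ∈ Gamma0 M, atkinLehnerMatrix ℓ M a b = cosetRep ℓ M a b i * γ := by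
  cases i with
  | none => exact ⟨1, one_mem _, by simp [cosetRep]⟩
  | some j =>
    refine ⟨⟨!![ℓ - j * M, a - j * b; M, b], ?_⟩, mem_Gamma0_iff_dvd.mpr (by simp), ?_⟩
    · rw [Matrix.det_fin_two_of]
      linear_combination hab
    · rw [Matrix.SpecialLinearGroup.coe_mk, cosetRep, shiftMatrix, atkinLehnerMatrix,
        Matrix.mul_fin_two, Matrix.of_fin_two_eq_iff]
      refine ⟨?_, ?_, ?_, ?_⟩ <;> ring

lemma exists_mem_Gamma0_mul_atkinLehnerMatrix (hℓ : ℓ ≠ 0) (hab : ℓ * b - a * M = 1)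
    {A : Matrix (Fin 2) (Fin 2) ℤ} (hA : A ∈ atkinLehnerSet ℓ M) (hα : (ℓ : ℤ) ∣ A 0 0) :
    ∃ γ ∈ Gamma0 (ℓ * M), A = γ * atkinLehnerMatrix ℓ M a b := by
  obtain ⟨α, β, c, e, rfl⟩ : ∃ α β c e, A = !![α, β; c, e] := ⟨_, _, _, _, A.eta_fin_two⟩
  obtain ⟨hdet, ⟨c₁, rfl⟩, ⟨e₀, rfl⟩⟩ := hA
  obtain ⟨α₀, rfl⟩ := hα
  rw [Matrix.det_fin_two_of] at hdet
  have hunit : ℓ * α₀ * e₀ - β * M * c₁ = 1 :=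
    mul_left_cancel₀ (Int.natCast_ne_zero.mpr hℓ) (by linear_combination hdet)
  -- `γ = A W⁻¹`; its entries are integral because `ℓ ∣ α` and `ℓ ∣ c`.
  refine ⟨⟨!![ℓ * α₀ * b - β * M, β - α₀ * a; ℓ * M * (c₁ * b - e₀), ℓ * e₀ - M * c₁ * a], ?_⟩,
    mem_Gamma0_iff_dvd.mpr ⟨c₁ * b - e₀, by simp⟩, ?_⟩
  · rw [Matrix.det_fin_two_of]
    linear_combination (ℓ * b - a * M) * hunit + hab
  · rw [Matrix.SpecialLinearGroup.coe_mk, atkinLehnerMatrix, Matrix.mul_fin_two,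
      Matrix.of_fin_two_eq_iff]
    refine ⟨?_, ?_, ?_, ?_⟩
    · linear_combination -ℓ * α₀ * hab
    · linear_combination -β * hab
    · linear_combination -ℓ * M * c₁ * hab
    · linear_combination -ℓ * e₀ * hab

lemma exists_mem_Gamma0_mul_shiftMatrix (hℓ : ℓ.Prime) {A : Matrix (Fin 2) (Fin 2) ℤ}
    (hA : A ∈ atkinLehnerSet ℓ M) (hα : ¬ (ℓ : ℤ) ∣ A 0 0) :
    ∃ γ ∈ Gamma0 (ℓ * M), ∃ j : Fin ℓ, A = γ * shiftMatrix ℓ j := by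
  have := Fact.mk hℓ
  obtain ⟨α, β, c, e, rfl⟩ : ∃ α β c e, A = !![α, β; c, e] := ⟨_, _, _, _, A.eta_fin_two⟩
  obtain ⟨hdet, hc, he⟩ := hA
  simp only [Matrix.of_apply, Matrix.cons_val] at hc he hα
  rw [Matrix.det_fin_two_of] at hdet
  have hα' : (α : ZMod ℓ) ≠ 0 := by rwa [Ne, ZMod.intCast_zmod_eq_zero_iff_dvd]
  let j : Fin ℓ := ⟨(β * (α : ZMod ℓ)⁻¹ : ZMod ℓ).val, ZMod.val_lt _⟩
  obtain ⟨t, ht⟩ : (ℓ : ℤ) ∣ β - α * j := by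
    rw [← ZMod.intCast_zmod_eq_zero_iff_dvd]
    simp [j, mul_left_comm _ (β : ZMod ℓ), mul_inv_cancel₀ hα']
  obtain ⟨s, hs⟩ : (ℓ : ℤ) ∣ e - c * j := dvd_sub he ((dvd_mul_right _ _).trans hc |>.mul_right _)
  refine ⟨⟨!![α, t; c, s], ?_⟩, mem_Gamma0_iff_dvd.mpr (by simpa using hc), j, ?_⟩
  · rw [Matrix.det_fin_two_of]
    exact mul_left_cancel₀ (Int.natCast_ne_zero.mpr hℓ.ne_zero)
      (by linear_combination -α * hs + c * ht + hdet)
  · rw [Matrix.SpecialLinearGroup.coe_mk, shiftMatrix, Matrix.mul_fin_two,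
      Matrix.of_fin_two_eq_iff]
    exact ⟨by ring, by linear_combination ht, by ring, by linear_combination hs⟩

lemma exists_mem_Gamma0_mul_cosetRep (hℓ : ℓ.Prime) (hab : ℓ * b - a * M = 1)
    {A : Matrix (Fin 2) (Fin 2) ℤ} (hA : A ∈ atkinLehnerSet ℓ M) :
    ∃ γ ∈ Gamma0 (ℓ * M), ∃ i, A = γ * cosetRep ℓ M a b i := by
  by_cases hα : (ℓ : ℤ) ∣ A 0 0
  · obtain ⟨γ, hγ, rfl⟩ := exists_mem_Gamma0_mul_atkinLehnerMatrix hℓ.ne_zero hab hA hα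
    exact ⟨γ, hγ, none, rfl⟩
  · obtain ⟨γ, hγ, j, rfl⟩ := exists_mem_Gamma0_mul_shiftMatrix hℓ hA hα
    exact ⟨γ, hγ, some j, rfl⟩

lemma eq_of_SL_mul_cosetRep_eq (hℓ : ℓ.Prime) (hab : ℓ * b - a * M = 1) (u : SL(2, ℤ))
    {i i' : Option (Fin ℓ)} (h : u * cosetRep ℓ M a b i = cosetRep ℓ M a b i') : i = i' := by
  have hℓ1 : ¬ (ℓ : ℤ) ∣ 1 := by exact_mod_cast hℓ.not_dvd_one
  rw [Matrix.eta_fin_two (u : Matrix (Fin 2) (Fin 2) ℤ)] at h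
  rcases i with _ | j <;> rcases i' with _ | j' <;>
    simp only [cosetRep, atkinLehnerMatrix, shiftMatrix, Matrix.mul_fin_two,
      Matrix.of_fin_two_eq_iff] at h
  · rfl
  · exact (hℓ1 ⟨u 0 0 + u 0 1 * M, by linear_combination -h.1⟩).elim
  · obtain ⟨h00, h01, -⟩ := h
    exact (hℓ1 ⟨b - (j + u 0 1) * M, by linear_combination -hab + M * h01 - (j * M) * h00⟩).elim
  · obtain ⟨h00, h01, -⟩ := h
    have hj : (j : ℤ) % ℓ = j := Int.emod_eq_of_lt (by positivity) (by exact_mod_cast j.isLt)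
    have hj' : (j' : ℤ) % ℓ = j' := Int.emod_eq_of_lt (by positivity) (by exact_mod_cast j'.isLt)
    have hmod := congrArg (· % (ℓ : ℤ)) (by linear_combination h01 - j * h00 :
      (j : ℤ) + u 0 1 * ℓ = j')
    simp only [Int.add_mul_emod_self_right, hj, hj'] at hmod
    exact congrArg some (Fin.ext (by exact_mod_cast hmod))

end Matrices

noncomputable def intGL (A : Matrix (Fin 2) (Fin 2) ℤ) (hA : A.det ≠ 0) : GL (Fin 2) ℝ :=
  .mkOfDetNeZero (A.map (algebraMap ℤ ℝ)) (by simpa [← Int.cast_det] using hA)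

section IntGL

variable {A B : Matrix (Fin 2) (Fin 2) ℤ} {hA : A.det ≠ 0}

@[simp]
lemma coe_intGL : (intGL A hA : Matrix (Fin 2) (Fin 2) ℝ) = A.map (algebraMap ℤ ℝ) := rfl

lemma intGL_inj {hB : B.det ≠ 0} : intGL A hA = intGL B hB ↔ A = B := by
  rw [Units.ext_iff, coe_intGL, coe_intGL]
  exact (Matrix.map_injective (algebraMap ℤ ℝ).injective_int).eq_iff

lemma intGL_mul_mapGL (γ : SL(2, ℤ)) :
    intGL A hA * mapGL ℝ γ = intGL (A * (γ : Matrix (Fin 2) (Fin 2) ℤ)) (by simpa using hA) :=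
  Units.ext (Matrix.map_mul).symm

lemma mapGL_mul_intGL (γ : SL(2, ℤ)) :
    mapGL ℝ γ * intGL A hA = intGL ((γ : Matrix (Fin 2) (Fin 2) ℤ) * A) (by simpa using hA) :=
  Units.ext (Matrix.map_mul).symm

lemma val_det_intGL : (intGL A hA).det.val = A.det := by
  simp [Matrix.GeneralLinearGroup.val_det_apply, ← Int.cast_det]

lemma coe_intGL_smul (hA : 0 < A.det) (z : ℍ) :
    ((intGL A hA.ne' • z : ℍ) : ℂ) = (A 0 0 * z + A 0 1) / (A 1 0 * z + A 1 1) := by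
  rw [coe_smul_of_det_pos (by rw [val_det_intGL]; exact_mod_cast hA)]
  simp [num, denom]

lemma slash_intGL_apply (f : ℍ → ℂ) (k : ℤ) (hA : 0 < A.det) (z : ℍ) :
    (f ∣[k] intGL A hA.ne') z =
      f (intGL A hA.ne' • z) * (A.det : ℂ) ^ (k - 1) * (A 1 0 * z + A 1 1) ^ (-k) := by
  have hdet : 0 < (intGL A hA.ne').det.val := by rw [val_det_intGL]; exact_mod_cast hA
  rw [ModularForm.slash_apply, σ, if_pos hdet, abs_of_pos hdet, val_det_intGL]
  simp [denom]

end IntGL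

section LevelDrop

variable {ℓ M : ℕ} {a b : ℤ}

lemma slash_intGL_shiftMatrix_apply (hℓ : 0 < ℓ) (f : ℍ → ℂ) (k : ℤ) (j : ℕ)
    (h : (shiftMatrix ℓ j).det ≠ 0) (z : ℍ) :
    (f ∣[k] intGL (shiftMatrix ℓ j) h) z = (ℓ : ℂ)⁻¹ * f (shiftDiv ℓ hℓ j z) := by
  have hz : intGL (shiftMatrix ℓ j) h • z = shiftDiv ℓ hℓ j z := by
    ext1
    rw [coe_intGL_smul (det_shiftMatrix_pos hℓ j)]
    simp [shiftMatrix, shiftDiv]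
  have hℓ' : (ℓ : ℂ) ≠ 0 := by exact_mod_cast hℓ.ne'
  rw [slash_intGL_apply f k (det_shiftMatrix_pos hℓ j), hz, det_shiftMatrix]
  simp only [shiftMatrix, Matrix.of_apply, Matrix.cons_val]
  push_cast
  rw [zero_mul, zero_add, zpow_sub_one₀ hℓ', zpow_neg]
  field_simp

lemma slash_intGL_atkinLehnerMatrix_apply (hℓ : 0 < ℓ) (hab : ℓ * b - a * M = 1)
    (f : ℍ → ℂ) (k : ℤ) (h : (atkinLehnerMatrix ℓ M a b).det ≠ 0) {z w : ℍ}
    (hw : (w : ℂ) = (ℓ * z + a) / (ℓ * M * z + ℓ * b)) :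
    (f ∣[k] intGL (atkinLehnerMatrix ℓ M a b) h) z =
      (ℓ : ℂ) ^ (k - 1) * (ℓ * M * z + ℓ * b) ^ (-k) * f w := by
  have hz : intGL (atkinLehnerMatrix ℓ M a b) h • z = w := by
    ext1
    rw [coe_intGL_smul (det_atkinLehnerMatrix_pos hℓ hab), hw]
    simp [atkinLehnerMatrix]
  rw [slash_intGL_apply f k (det_atkinLehnerMatrix_pos hℓ hab), hz, det_atkinLehnerMatrix hab]
  simp only [atkinLehnerMatrix, Matrix.of_apply, Matrix.cons_val]
  push_cast
  ring

theorem exists_modularForm_eq_sum_slash_cosetRep (hℓ : ℓ.Prime) (hab : ℓ * b - a * M = 1)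
    {k : ℤ} (f : ModularForm (Gamma0 (ℓ * M)) k) :
    ∃ g : ModularForm (Gamma0 M) k,
      ⇑g = ∑ i, ⇑f ∣[k] intGL (cosetRep ℓ M a b i) (det_cosetRep_pos hℓ.pos hab i).ne' := by
  choose γ hγ hWγ using exists_mem_Gamma0_cosetRep_mul (ℓ := ℓ) (M := M) hab
  refine ModularForm.exists_eq_sum_slash f
    (W := intGL (atkinLehnerMatrix ℓ M a b) (det_atkinLehnerMatrix_pos hℓ.pos hab).ne')
    (h := fun i ↦ ⟨mapGL ℝ (γ i), Subgroup.mem_map_of_mem _ (hγ i)⟩)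
    (fun i ↦ (intGL_inj.mpr (hWγ i)).trans (intGL_mul_mapGL _).symm) ?_ ?_
  · rintro _ ⟨γ₀, hγ₀, rfl⟩
    obtain ⟨γ', hγ', i, h⟩ :=
      exists_mem_Gamma0_mul_cosetRep hℓ hab (atkinLehnerMatrix_mul_mem hab hγ₀)
    refine ⟨i, γ', hγ', ?_⟩
    rw [eq_mul_inv_iff_mul_eq]
    exact (mapGL_mul_intGL γ').trans ((intGL_inj.mpr h.symm).trans (intGL_mul_mapGL γ₀).symm)
  · rintro i j ⟨γ', -, hγ'⟩
    rw [eq_mul_inv_iff_mul_eq] at hγ'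
    have h : (γ' : Matrix (Fin 2) (Fin 2) ℤ) * cosetRep ℓ M a b j = cosetRep ℓ M a b i :=
      intGL_inj.mp ((mapGL_mul_intGL γ').symm.trans hγ')
    exact (eq_of_SL_mul_cosetRep_eq hℓ hab γ' h).symm

end LevelDrop

theorem Ul_add_scaled_atkinLehner_level_drop_general (N ℓ : ℕ) (hℓ : ℓ.Prime)
    (hdvd : ℓ ∣ N) (a b : ℤ)
    (hab : (ℓ : ℤ) * b - a * ((N / ℓ : ℕ) : ℤ) = 1) (k : ℕ)
    (f : ModularForm (Gamma0 N) (k : ℤ)) :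
    ∃ g : ModularForm (Gamma0 (N / ℓ)) (k : ℤ),
      ∀ z w : ℍ,
        (w : ℂ) = ((ℓ : ℂ) * z + (a : ℂ)) / ((N : ℂ) * z + (ℓ : ℂ) * (b : ℂ)) →
        g z = (1 / (ℓ : ℂ)) * ∑ j : Fin ℓ, f (UpperHalfPlane.shiftDiv ℓ hℓ.pos j z) +
          (ℓ : ℂ) ^ ((k : ℤ) - 1) *
            ((N : ℂ) * z + (ℓ : ℂ) * (b : ℂ)) ^ (-(k : ℤ)) * f w := by
  obtain ⟨M, rfl⟩ := hdvd
  rw [Nat.mul_div_cancel_left M hℓ.pos] at hab ⊢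
  obtain ⟨g, hg⟩ := exists_modularForm_eq_sum_slash_cosetRep hℓ hab f
  refine ⟨g, fun z w hw ↦ ?_⟩
  push_cast at hw ⊢
  rw [hg, Finset.sum_apply, Fintype.sum_option, Finset.mul_sum, add_comm]
  simp only [cosetRep, slash_intGL_shiftMatrix_apply hℓ.pos, one_div,
    slash_intGL_atkinLehnerMatrix_apply hℓ.pos hab _ _ _ hw]

/-- for `ℓ ∥ N`, the form `U_ℓ(f) + ℓ^{k/2-1} w_ℓ(f)` of a form
`f ∈ M_k(Γ₀(N))` has level `N/ℓ`. -/
theorem Ul_add_scaled_atkinLehner_level_drop (N ℓ : ℕ) (hN : 0 < N) (hℓ : ℓ.Prime)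
    (hdvd : ℓ ∣ N) (hndvd : ¬ ℓ ^ 2 ∣ N) (a b : ℤ)
    (hab : (ℓ : ℤ) * b - a * ((N / ℓ : ℕ) : ℤ) = 1) (k : ℕ)
    (f : ModularForm (Gamma0 N) (k : ℤ)) :
    ∃ g : ModularForm (Gamma0 (N / ℓ)) (k : ℤ),
      ∀ z w : ℍ,
        (w : ℂ) = ((ℓ : ℂ) * z + (a : ℂ)) / ((N : ℂ) * z + (ℓ : ℂ) * (b : ℂ)) →
        g z = (1 / (ℓ : ℂ)) * ∑ j : Fin ℓ, f (UpperHalfPlane.shiftDiv ℓ hℓ.pos j z) +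
          (ℓ : ℂ) ^ ((k : ℤ) - 1) *
            ((N : ℂ) * z + (ℓ : ℂ) * (b : ℂ)) ^ (-(k : ℤ)) * f w :=
  Ul_add_scaled_atkinLehner_level_drop_general N ℓ hℓ hdvd a b hab k f
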